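/- Let E be an unstable H*V-A-module which is free as an H*V-module and such that Ē is reduced as an unstable A-module. Then E is reduced as an unstable A-module. -/

import Mathlib

/-!
Common preamble: the mod 2 Steenrod algebra `SteenrodAlgebra` (defined by generators
`Sq i` and the Adem relations), the category `U` of unstable modules over it
(`UnstableModule`, `UnstableHom`), the polynomial algebra `H^*V` for `V` an elementary
abelian 2-group of rank `d` (`HVSetup`), the category `H^*V-U` of unstable
`H^*V`-`A`-modules (`HVModule`, `HVHom`), and the various notions used in the paper
(nilpotent, reduced, nil-closed, injectives, injective hulls, Brown-Gitler modules,
tensor products, direct sums, the functor `Fix`, bar quotients `Ē = F_2 ⊗_{H^*V} E`, …).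
-/

noncomputable section

/-- The Adem relations (together with `Sq⁰ = 1`) on the free `ZMod 2`-algebra
generated by symbols `Sq i`, `i : ℕ`. -/
inductive AdemRel : FreeAlgebra (ZMod 2) ℕ → FreeAlgebra (ZMod 2) ℕ → Prop
  | adem (a b : ℕ) (ha : 0 < a) (hab : a < 2 * b) :
      AdemRel (FreeAlgebra.ι (ZMod 2) a * FreeAlgebra.ι (ZMod 2) b)
        (∑ c ∈ Finset.range (a / 2 + 1),
          ((Nat.choose (b - c - 1) (a - 2 * c) : ZMod 2)) •
            (FreeAlgebra.ι (ZMod 2) (a + b - c) * FreeAlgebra.ι (ZMod 2) c))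
  | unit : AdemRel (FreeAlgebra.ι (ZMod 2) 0) 1

/-- The mod 2 Steenrod algebra `A`. -/
abbrev SteenrodAlgebra : Type := RingQuot AdemRel

/-- The Steenrod squares `Sq i ∈ A`. -/
def Sq (i : ℕ) : SteenrodAlgebra :=
  RingQuot.mkAlgHom (ZMod 2) AdemRel (FreeAlgebra.ι (ZMod 2) i)

/-- An unstable module over the mod 2 Steenrod algebra: a graded `ZMod 2`-vector space
with a compatible `A`-action such that `Sq i` raises degrees by `i` and
`Sq i x = 0` whenever `i > |x|` (the instability condition).  Objects of `U`. -/
structure UnstableModule : Type 1 where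
  carrier : Type
  [acg : AddCommGroup carrier]
  [modA : Module SteenrodAlgebra carrier]
  [modF : Module (ZMod 2) carrier]
  [tower : IsScalarTower (ZMod 2) SteenrodAlgebra carrier]
  grading : ℕ → Submodule (ZMod 2) carrier
  isInternal : DirectSum.IsInternal grading
  sq_mem : ∀ (i n : ℕ) (x : carrier), x ∈ grading n → Sq i • x ∈ grading (n + i)
  instability : ∀ (i n : ℕ) (x : carrier), x ∈ grading n → n < i → Sq i • x = 0

attribute [instance] UnstableModule.acg UnstableModule.modA UnstableModule.modF
  UnstableModule.tower

/-- Morphisms of `U`: `A`-linear maps of degree zero. -/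
structure UnstableHom (M N : UnstableModule) where
  toFun : M.carrier →ₗ[SteenrodAlgebra] N.carrier
  map_grading : ∀ (n : ℕ) (x : M.carrier), x ∈ M.grading n → toFun x ∈ N.grading n

/-- Composition of morphisms of `U`. -/
def UnstableHom.comp {M N P : UnstableModule} (g : UnstableHom N P) (f : UnstableHom M N) :
    UnstableHom M P :=
  ⟨g.toFun.comp f.toFun, fun n x hx => g.map_grading n _ (f.map_grading n x hx)⟩

/-- The identity morphism of `U`. -/
def UnstableHom.id (M : UnstableModule) : UnstableHom M M :=
  ⟨LinearMap.id, fun _ _ h => h⟩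

/-- `M ≅ N` in the category `U`. -/
def UIso (M N : UnstableModule) : Prop :=
  ∃ (f : UnstableHom M N) (g : UnstableHom N M),
    (∀ x, g.toFun (f.toFun x) = x) ∧ ∀ y, f.toFun (g.toFun y) = y

/-- `sq0Iter M k n x` is the `k`-fold iterate of `Sq₀ : x ↦ Sq^{|x|} x` on an element
`x` of degree `n` (whose `j`-th iterate has degree `2^j * n`). -/
def sq0Iter (M : UnstableModule) : ℕ → ℕ → M.carrier → M.carrier
  | 0, _, x => x
  | k + 1, n, x => Sq (2 ^ k * n) • sq0Iter M k n x

/-- An unstable module is nilpotent if every (homogeneous) element is killed by some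
iterate of `Sq₀`. -/
def IsNilpotentU (M : UnstableModule) : Prop :=
  ∀ (n : ℕ) (x : M.carrier), x ∈ M.grading n → ∃ k, sq0Iter M k n x = 0

/-- An unstable module is reduced if `Sq₀ : x ↦ Sq^{|x|} x` is injective. -/
def IsReducedU (M : UnstableModule) : Prop :=
  ∀ (n : ℕ) (x : M.carrier), x ∈ M.grading n → Sq n • x = 0 → x = 0

/-- An unstable module is nil-closed if it is reduced and `Ker Sq₁ = Im Sq₀`
(on homogeneous elements, `Sq₁ x = Sq^{|x|-1} x` and `Sq₀ y = Sq^{|y|} y`). -/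
def IsNilClosedU (M : UnstableModule) : Prop :=
  IsReducedU M ∧
  ∀ (n : ℕ) (x : M.carrier), x ∈ M.grading n →
    (Sq (n - 1) • x = 0 ↔ ∃ (m : ℕ) (y : M.carrier), y ∈ M.grading m ∧ Sq m • y = x)

/-- A graded submodule: an `A`-submodule spanned by its homogeneous elements. -/
def IsGradedSub (M : UnstableModule) (p : Submodule SteenrodAlgebra M.carrier) : Prop :=
  ∀ x ∈ p, x ∈ Submodule.span (ZMod 2)
    ((p : Set M.carrier) ∩ ⋃ n, ((M.grading n : Submodule (ZMod 2) M.carrier) : Set M.carrier))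

/-- Injective objects of the category `U` (lifting property against monomorphisms). -/
def IsInjectiveU (I : UnstableModule) : Prop :=
  ∀ (M N : UnstableModule) (f : UnstableHom M N), Function.Injective f.toFun →
    ∀ g : UnstableHom M I, ∃ h : UnstableHom N I, ∀ x, h.toFun (f.toFun x) = g.toFun x

/-- `i : M ↪ E` exhibits `E` as the injective hull of `M` in `U`: `E` is injective,
`i` is injective, and the extension is essential (every non-trivial graded
`A`-submodule of `E` meets the image of `M` non-trivially). -/
def IsInjectiveHullU (M E : UnstableModule) (i : UnstableHom M E) : Prop :=
  IsInjectiveU E ∧ Function.Injective i.toFun ∧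
  ∀ p : Submodule SteenrodAlgebra E.carrier, IsGradedSub E p → p ≠ ⊥ →
    ∃ x, x ≠ 0 ∧ x ∈ p ∧ x ∈ Set.range i.toFun

/-- The Brown-Gitler module `J(n)`: it represents the functor `M ↦ (Mⁿ)^∨`, i.e.
there is a bijection `Hom_U(M, J(n)) ≅ Hom_{F_2}(Mⁿ, F_2)`, natural in `M`. -/
def IsBrownGitler (J : UnstableModule) (n : ℕ) : Prop :=
  ∃ Φ : ∀ M : UnstableModule, UnstableHom M J → (↥(M.grading n) →ₗ[ZMod 2] ZMod 2),
    (∀ M, Function.Bijective (Φ M)) ∧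
    ∀ (M M' : UnstableModule) (f : UnstableHom M' M) (g : UnstableHom M J)
      (x : ↥(M'.grading n)),
      Φ M' (g.comp f) x = Φ M g ⟨f.toFun x, f.map_grading n x x.2⟩

/-- `T` realizes the tensor product `M ⊗_{F_2} N` in `U` (with the Cartan formula
giving the `A`-action and the total grading). -/
def IsTensorOf (M N T : UnstableModule) : Prop :=
  ∃ β : M.carrier →ₗ[ZMod 2] N.carrier →ₗ[ZMod 2] T.carrier,
    (∀ (m n : ℕ) (x : M.carrier) (y : N.carrier), x ∈ M.grading m → y ∈ N.grading n →
      β x y ∈ T.grading (m + n)) ∧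
    (∀ (k : ℕ) (x : M.carrier) (y : N.carrier),
      Sq k • β x y = ∑ i ∈ Finset.range (k + 1), β (Sq i • x) (Sq (k - i) • y)) ∧
    Function.Bijective (TensorProduct.lift β)

/-- `I` is the direct sum (coproduct in `U`) of the family `F`. -/
def IsDirectSumOf (I : UnstableModule) {ι : Type} (F : ι → UnstableModule) : Prop :=
  letI := Classical.decEq ι
  ∃ j : ∀ i, UnstableHom (F i) I,
    Function.Bijective
      (DirectSum.toModule SteenrodAlgebra ι I.carrier fun i => (j i).toFun)

/-- An indecomposable (non-trivial) object of `U`: its only idempotent endomorphisms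
are `0` and the identity. -/
def IndecomposableU (L : UnstableModule) : Prop :=
  (∃ x : L.carrier, x ≠ 0) ∧
  ∀ e : UnstableHom L L, (∀ x, e.toFun (e.toFun x) = e.toFun x) →
    (∀ x, e.toFun x = 0) ∨ (∀ x, e.toFun x = x)

/-- `H^*V` for `V` an elementary abelian 2-group of rank `d`: a polynomial algebra
`F_2[t_1, …, t_d]` on generators of degree 1, with its unstable `A`-algebra structure
(`Sq¹ t = t²` and the Cartan formula).  `cV` is the top Dickson invariant
`∏_{0 ≠ u ∈ H¹V} u`. -/
structure HVSetup (d : ℕ) : Type 1 where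
  H : Type
  [ring : CommRing H]
  [modA : Module SteenrodAlgebra H]
  [modF : Module (ZMod 2) H]
  [tower : IsScalarTower (ZMod 2) SteenrodAlgebra H]
  grading : ℕ → Submodule (ZMod 2) H
  isInternal : DirectSum.IsInternal grading
  sq_mem : ∀ (i n : ℕ) (x : H), x ∈ grading n → Sq i • x ∈ grading (n + i)
  instability : ∀ (i n : ℕ) (x : H), x ∈ grading n → n < i → Sq i • x = 0
  one_mem : (1 : H) ∈ grading 0
  mul_mem : ∀ (m n : ℕ) (x y : H), x ∈ grading m → y ∈ grading n → x * y ∈ grading (m + n)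
  cartanH : ∀ (k : ℕ) (x y : H),
    Sq k • (x * y) = ∑ i ∈ Finset.range (k + 1), (Sq i • x) * (Sq (k - i) • y)
  gens : Fin d → H
  gens_deg : ∀ i, gens i ∈ grading 1
  sq_one_gen : ∀ i, Sq 1 • gens i = gens i * gens i
  monomial_indep : LinearIndependent (ZMod 2) (fun e : Fin d → ℕ => ∏ i, gens i ^ e i)
  monomial_span : ⊤ ≤ Submodule.span (ZMod 2) (Set.range fun e : Fin d → ℕ => ∏ i, gens i ^ e i)
  cV : H
  cV_spec : ∃ s : Finset H, (∀ u, u ∈ s ↔ (u ∈ grading 1 ∧ u ≠ 0)) ∧ cV = ∏ u ∈ s, u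

attribute [instance] HVSetup.ring HVSetup.modA HVSetup.modF HVSetup.tower

/-- `H^*V` as an object of `U`. -/
@[reducible] def HVSetup.toUnstable {d : ℕ} (V : HVSetup d) : UnstableModule where
  carrier := V.H
  grading := V.grading
  isInternal := V.isInternal
  sq_mem := V.sq_mem
  instability := V.instability

/-- A representative of an indecomposable direct factor of some `H^*((Z/2)^m)`
(an element of the set `𝓛` of the classification theorems). -/
def IsIndecInjFactor (L : UnstableModule) : Prop :=
  IndecomposableU L ∧
  ∃ (m : ℕ) (V : HVSetup m) (j : UnstableHom L V.toUnstable)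
    (r : UnstableHom V.toUnstable L), ∀ x, r.toFun (j.toFun x) = x

/-- An unstable `H^*V`-`A`-module: an object `E` of `U` together with a compatible
`H^*V`-module structure satisfying the Cartan formula, and the data of the unstable
`A`-module `Ē = F_2 ⊗_{H^*V} E = E / (H̃^*V · E)` with the projection `barπ : E → Ē`. -/
structure HVModule {d : ℕ} (V : HVSetup d) : Type 1 where
  E : UnstableModule
  [modH : Module V.H E.carrier]
  smul_grading : ∀ (m n : ℕ) (h : V.H) (x : E.carrier),
    h ∈ V.grading m → x ∈ E.grading n → h • x ∈ E.grading (m + n)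
  cartan : ∀ (k : ℕ) (h : V.H) (x : E.carrier),
    Sq k • (h • x) = ∑ i ∈ Finset.range (k + 1), (Sq i • h) • (Sq (k - i) • x)
  bar : UnstableModule
  barπ : UnstableHom E bar
  barπ_surj : Function.Surjective barπ.toFun
  barπ_ker : ∀ y : E.carrier, barπ.toFun y = 0 ↔
    y ∈ Submodule.span (ZMod 2)
      {z : E.carrier | ∃ (m : ℕ) (h : V.H) (x : E.carrier),
        1 ≤ m ∧ h ∈ V.grading m ∧ z = h • x}

attribute [instance] HVModule.modH

/-- Morphisms of `H^*V-U`: `H^*V`-linear and `A`-linear maps of degree zero. -/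
structure HVHom {d : ℕ} (V : HVSetup d) (M N : HVModule V) extends UnstableHom M.E N.E where
  map_hsmul : ∀ (h : V.H) (x : M.E.carrier), toFun (h • x) = h • toFun x

/-- `M ≅ N` in the category `H^*V-U`. -/
def HVIso {d : ℕ} {V : HVSetup d} (M N : HVModule V) : Prop :=
  ∃ (f : HVHom V M N) (g : HVHom V N M),
    (∀ x, g.toFun (f.toFun x) = x) ∧ ∀ y, f.toFun (g.toFun y) = y

/-- `ι : P → T` realizes `T` as `H^*V ⊗ P`, via the universal property: every `A`-linear
map from `P` to an unstable `H^*V`-`A`-module extends uniquely to an `H^*V`-`A`-linear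
map from `T`. -/
def IsHVTensor {d : ℕ} (V : HVSetup d) (P : UnstableModule) (T : HVModule V)
    (ι : UnstableHom P T.E) : Prop :=
  ∀ (N : HVModule V) (f : UnstableHom P N.E),
    ∃ g : HVHom V T N, (∀ x, g.toFun (ι.toFun x) = f.toFun x) ∧
      ∀ g' : HVHom V T N, (∀ x, g'.toFun (ι.toFun x) = f.toFun x) →
        ∀ y, g'.toFun y = g.toFun y

/-- Injective objects of the category `H^*V-U`. -/
def IsInjectiveHVU {d : ℕ} {V : HVSetup d} (I : HVModule V) : Prop :=
  ∀ (M N : HVModule V) (f : HVHom V M N), Function.Injective f.toFun →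
    ∀ g : HVHom V M I, ∃ h : HVHom V N I, ∀ x, h.toFun (f.toFun x) = g.toFun x

/-- `i : M ↪ E` exhibits `E` as the injective hull of `M` in `H^*V-U`. -/
def IsInjectiveHullHVU {d : ℕ} {V : HVSetup d} (M E : HVModule V) (i : HVHom V M E) : Prop :=
  IsInjectiveHVU E ∧ Function.Injective i.toFun ∧
  ∀ p : Submodule SteenrodAlgebra E.E.carrier, IsGradedSub E.E p →
    (∀ (h : V.H) (x : E.E.carrier), x ∈ p → h • x ∈ p) → p ≠ ⊥ →
    ∃ x, x ≠ 0 ∧ x ∈ p ∧ x ∈ Set.range i.toFun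

/-- `I` is the direct sum (in `H^*V-U`) of the family `F`. -/
def IsHVDirectSumOf {d : ℕ} {V : HVSetup d} (I : HVModule V) {ι : Type}
    (F : ι → HVModule V) : Prop :=
  letI := Classical.decEq ι
  ∃ j : ∀ i, HVHom V (F i) I,
    Function.Bijective
      (DirectSum.toModule SteenrodAlgebra ι I.E.carrier fun i => (j i).toFun)

/-- `T` realizes `M ⊗_{F_2} L` in `H^*V-U` (with `H^*V` acting on the first factor). -/
def IsHVTensorWithU {d : ℕ} {V : HVSetup d} (M : HVModule V) (L : UnstableModule)
    (T : HVModule V) : Prop :=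
  ∃ β : M.E.carrier →ₗ[ZMod 2] L.carrier →ₗ[ZMod 2] T.E.carrier,
    (∀ (m n : ℕ) (x : M.E.carrier) (y : L.carrier),
      x ∈ M.E.grading m → y ∈ L.grading n → β x y ∈ T.E.grading (m + n)) ∧
    (∀ (k : ℕ) (x : M.E.carrier) (y : L.carrier),
      Sq k • β x y = ∑ i ∈ Finset.range (k + 1), β (Sq i • x) (Sq (k - i) • y)) ∧
    (∀ (h : V.H) (x : M.E.carrier) (y : L.carrier), β (h • x) y = h • β x y) ∧
    Function.Bijective (TensorProduct.lift β)

/-- A morphism of setups `H^*(V/W) → H^*V` induced by a projection `V → V/W` onto a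
quotient by a subgroup `W`: an injective map of unstable `A`-algebras. -/
structure SetupMap {e d : ℕ} (U : HVSetup e) (V : HVSetup d) where
  toHom : UnstableHom U.toUnstable V.toUnstable
  map_one : toHom.toFun 1 = 1
  map_mul : ∀ x y, toHom.toFun (x * y) = toHom.toFun x * toHom.toFun y
  inj : Function.Injective toHom.toFun

/-- `ι : M → T` realizes `T` as the base change `H^*V ⊗_{H^*(V/W)} M` along
`ρ : H^*(V/W) → H^*V`, via the universal property of extension of scalars. -/
def IsBaseChangeOf {e d : ℕ} {U : HVSetup e} {V : HVSetup d} (ρ : SetupMap U V)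
    (M : HVModule U) (T : HVModule V) (ι : UnstableHom M.E T.E) : Prop :=
  (∀ (h : U.H) (x : M.E.carrier), ι.toFun (h • x) = ρ.toHom.toFun h • ι.toFun x) ∧
  ∀ (N : HVModule V) (f : UnstableHom M.E N.E),
    (∀ (h : U.H) (x : M.E.carrier), f.toFun (h • x) = ρ.toHom.toFun h • f.toFun x) →
    ∃ g : HVHom V T N, (∀ x, g.toFun (ι.toFun x) = f.toFun x) ∧
      ∀ g' : HVHom V T N, (∀ x, g'.toFun (ι.toFun x) = f.toFun x) →
        ∀ y, g'.toFun y = g.toFun y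

/-- The Brown-Gitler object `J_V(n)` of `H^*V-U`: it represents `M ↦ (Mⁿ)^∨` on
`H^*V-U`. -/
def IsHVBrownGitler {e : ℕ} (U : HVSetup e) (J : HVModule U) (n : ℕ) : Prop :=
  ∃ Φ : ∀ M : HVModule U, HVHom U M J → (↥(M.E.grading n) →ₗ[ZMod 2] ZMod 2),
    (∀ M, Function.Bijective (Φ M)) ∧
    ∀ (M M' : HVModule U) (f : HVHom U M' M) (g : HVHom U M J)
      (x : ↥(M'.E.grading n)),
      Φ M' ⟨g.toUnstableHom.comp f.toUnstableHom,
        fun h y => by simp [UnstableHom.comp, f.map_hsmul, g.map_hsmul]⟩ x =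
      Φ M g ⟨f.toFun x, f.map_grading n x x.2⟩

/-- The data of `Fix_V N` together with its couniversal property: `Fix_V` is left
adjoint to `H^*V ⊗ -`, and `η : N → H^*V ⊗ Fix_V N` is the unit (the adjoint of the
identity of `Fix_V N`). -/
structure FixData {d : ℕ} (V : HVSetup d) (N : HVModule V) where
  F : UnstableModule
  T : HVModule V
  ι : UnstableHom F T.E
  tensor : IsHVTensor V F T ι
  η : HVHom V N T
  univ : ∀ (P : UnstableModule) (T' : HVModule V) (ι' : UnstableHom P T'.E),
    IsHVTensor V P T' ι' → ∀ f : HVHom V N T',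
    ∃ φ : UnstableHom F P,
      (∀ g : HVHom V T T', (∀ x, g.toFun (ι.toFun x) = ι'.toFun (φ.toFun x)) →
        ∀ y, g.toFun (η.toFun y) = f.toFun y) ∧
      ∀ φ' : UnstableHom F P,
        (∀ g : HVHom V T T', (∀ x, g.toFun (ι.toFun x) = ι'.toFun (φ'.toFun x)) →
          ∀ y, g.toFun (η.toFun y) = f.toFun y) →
        ∀ z, φ'.toFun z = φ.toFun z

/-- `0 → M → I₀ → I₁` is the beginning of a minimal injective resolution in `U`:
`I₀` is the injective hull of `M` and `I₁` is the injective hull of `I₀/M`. -/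
def IsMinResStartU (M I0 I1 : UnstableModule) (e0 : UnstableHom M I0)
    (a : UnstableHom I0 I1) : Prop :=
  IsInjectiveHullU M I0 e0 ∧ IsInjectiveU I1 ∧
  (∀ x, a.toFun x = 0 ↔ x ∈ Set.range e0.toFun) ∧
  ∀ (C : UnstableModule) (q : UnstableHom I0 C), Function.Surjective q.toFun →
    (∀ x, q.toFun x = 0 ↔ x ∈ Set.range e0.toFun) →
    ∀ a' : UnstableHom C I1, (∀ x, a'.toFun (q.toFun x) = a.toFun x) →
      IsInjectiveHullU C I1 a'

/-- `0 → M → T₀ → T₁` is the beginning of a minimal injective resolution in `H^*V-U`. -/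
def IsMinResStartHV {d : ℕ} {V : HVSetup d} (M T0 T1 : HVModule V)
    (e0 : HVHom V M T0) (a : HVHom V T0 T1) : Prop :=
  IsInjectiveHullHVU M T0 e0 ∧ IsInjectiveHVU T1 ∧
  (∀ x, a.toFun x = 0 ↔ x ∈ Set.range e0.toFun) ∧
  ∀ (C : HVModule V) (q : HVHom V T0 C), Function.Surjective q.toFun →
    (∀ x, q.toFun x = 0 ↔ x ∈ Set.range e0.toFun) →
    ∀ a' : HVHom V C T1, (∀ x, a'.toFun (q.toFun x) = a.toFun x) →
      IsInjectiveHullHVU C T1 a'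

/-- `M` is (isomorphic to) the `n`-fold suspension `Σⁿ F_2`: one-dimensional,
concentrated in degree `n`. -/
def IsSphereLike (M : UnstableModule) (n : ℕ) : Prop :=
  (∀ (m : ℕ) (x : M.carrier), x ∈ M.grading m → m ≠ n → x = 0) ∧
  ∃ x, x ∈ M.grading n ∧ x ≠ 0 ∧ ∀ y ∈ M.grading n, y = 0 ∨ y = x

/-- `SM` realizes the suspension `Σ M` in `U`. -/
def IsSuspensionU (M SM : UnstableModule) : Prop :=
  ∃ s : M.carrier →+ SM.carrier, Function.Bijective s ∧
    (∀ (n : ℕ) (x : M.carrier), x ∈ M.grading n → s x ∈ SM.grading (n + 1)) ∧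
    ∀ (k : ℕ) (x : M.carrier), s (Sq k • x) = Sq k • s x

/-- `SM` realizes the suspension `Σ M` in `H^*V-U`. -/
def IsSuspensionHV {d : ℕ} {V : HVSetup d} (M SM : HVModule V) : Prop :=
  ∃ s : M.E.carrier →+ SM.E.carrier, Function.Bijective s ∧
    (∀ (n : ℕ) (x : M.E.carrier), x ∈ M.E.grading n → s x ∈ SM.E.grading (n + 1)) ∧
    (∀ (k : ℕ) (x : M.E.carrier), s (Sq k • x) = Sq k • s x) ∧
    ∀ (h : V.H) (x : M.E.carrier), s (h • x) = h • s x

/-- `M` realizes `Σ^dd (u · H^*V)`, the `dd`-fold suspension of the principal ideal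
generated by a homogeneous element `u` of degree `du` (an unstable `H^*V`-`A`-submodule
of `H^*V` since `u` is a product of linear forms): the witness `f` sends `h` to
`Σ^dd (u·h)`. -/
def IsSuspensionOfPrincipalIdeal {d : ℕ} (V : HVSetup d) (M : HVModule V)
    (dd du : ℕ) (u : V.H) : Prop :=
  u ∈ V.grading du ∧ u ≠ 0 ∧
  ∃ f : V.H →+ M.E.carrier,
    Function.Bijective f ∧
    (∀ (h h' : V.H), f (h' * h) = h' • f h) ∧
    (∀ (m : ℕ) (h : V.H), h ∈ V.grading m → f h ∈ M.E.grading (dd + du + m)) ∧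
    ∀ (k : ℕ) (h h' : V.H), Sq k • (u * h) = u * h' → Sq k • f h = f h'

/-- A `V`-CW-complex, recorded through its mod 2 cohomology `H^*X`, its mod 2
equivariant cohomology `H^*_V X` (the cohomology of the Borel construction, an
unstable `H^*V`-`A`-module) and the restriction map `H^*_V X → H^*X` to the fibre of
`X → X_{hV} → BV`.  The field `collapse_of_free` records the classical topological
fact that if `H^*_V X` is `H^*V`-free then the Serre spectral sequence collapses, so
that the restriction map identifies `F_2 ⊗_{H^*V} H^*_V X` with `H^*X`. -/
structure VCWComplex {d : ℕ} (V : HVSetup d) : Type 1 where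
  cohomology : UnstableModule
  equivariantCohomology : HVModule V
  restriction : UnstableHom equivariantCohomology.E cohomology
  restriction_hsmul : ∀ (m : ℕ) (h : V.H) (x : equivariantCohomology.E.carrier),
    1 ≤ m → h ∈ V.grading m → restriction.toFun (h • x) = 0
  collapse_of_free : Module.Free V.H equivariantCohomology.E.carrier →
    Function.Surjective restriction.toFun ∧
    ∀ y, restriction.toFun y = 0 ↔ equivariantCohomology.barπ.toFun y = 0

end

/-!
Lift a homogeneous `F₂`-basis of `Ē` to homogeneous elements `e_α` of `E`. By graded Nakayama the
`e_α` generate `E` over `H^*V`. The kernel `K` of the induced map `⊕_α H^*V → E` has coefficients in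
the augmentation ideal, and it is a direct summand because `E` is projective; so `K` is contained in
`H^{≥1}V · K`, hence in `H^{≥m}V · K` for every `m`, and `K = 0`: the `e_α` form a basis.

Since `Sq₀` is the Frobenius `h ↦ h²` on `H^*V`, the Cartan formula gives
`Sq₀ (∑ c_α e_α) = ∑ c_α² Sq₀ e_α`. Suppose this vanishes and let `p` be the largest `|e_α|` with
`c_α ≠ 0`. In the coordinates of degree `2p` only these top coefficients contribute, through the
matrix of `Sq₀ : Ē^p → Ē^{2p}`, and since squaring is injective on `H^*V` they are killed by that
matrix. As `Sq₀` is injective on `Ē`, they vanish, a contradiction.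
-/

open DirectSum

theorem ZMod.eq_zero_or_eq_one (c : ZMod 2) : c = 0 ∨ c = 1 := by
  revert c; decide

namespace DirectSum

section Shift

variable {M N σ τ : Type*} [AddCommMonoid M] [AddCommMonoid N] [SetLike σ M] [SetLike τ N]
  [AddSubmonoidClass σ M] [AddSubmonoidClass τ N] {𝓜 : ℕ → σ} {𝓝 : ℕ → τ}
  [Decomposition 𝓜] [Decomposition 𝓝]

theorem coe_decompose_map_of_degree (f : M →+ N) {k : ℕ}
    (hf : ∀ i, ∀ x ∈ 𝓜 i, f x ∈ 𝓝 (k + i)) (y : M) (n : ℕ) :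
    (decompose 𝓝 (f y) n : N) = if k ≤ n then f (decompose 𝓜 y (n - k)) else 0 := by
  classical
  have hterm : ∀ i, (decompose 𝓝 (f (decompose 𝓜 y i)) n : N) =
      if k ≤ n then (if i = n - k then f (decompose 𝓜 y i) else 0) else 0 := by
    intro i
    have hmem := hf i _ (decompose 𝓜 y i).2
    by_cases hi : k + i = n
    · rw [decompose_of_mem_same 𝓝 (hi ▸ hmem), if_pos (by omega), if_pos (by omega)]
    · rw [decompose_of_mem_ne 𝓝 hmem hi]
      split_ifs <;> first | rfl | omega
  conv_lhs => rw [← sum_support_decompose 𝓜 y, map_sum, decompose_sum, DFinsupp.finsetSum_apply,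
    AddSubmonoidClass.coe_finsetSum]
  simp_rw [hterm]
  split_ifs
  · rw [Finset.sum_ite_eq']
    split_ifs with hmem
    · rfl
    · rw [DFinsupp.notMem_support_iff.mp hmem, ZeroMemClass.coe_zero, map_zero]
  · exact Finset.sum_const_zero

end Shift

section DegreeGE

variable {A σ : Type*} [CommRing A] [SetLike σ A] [AddSubgroupClass σ A] (𝒜 : ℕ → σ)
  [GradedRing 𝒜]

theorem coe_decompose_mul_eq_zero_of_lt {a b : ℕ} {x y : A}
    (hx : ∀ i < a, (decompose 𝒜 x i : A) = 0) (hy : ∀ i < b, (decompose 𝒜 y i : A) = 0)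
    {n : ℕ} (hn : n < a + b) : (decompose 𝒜 (x * y) n : A) = 0 := by
  classical
  rw [decompose_mul, coe_mul_apply]
  refine Finset.sum_eq_zero fun ij hij => ?_
  rcases lt_or_ge ij.1 a with h | h
  · rw [hx _ h, zero_mul]
  · rw [hy _ (by have := (Finset.mem_filter.mp hij).2; omega), mul_zero]

def degreeGE (m : ℕ) : Ideal A where
  carrier := {x | ∀ i < m, (decompose 𝒜 x i : A) = 0}
  add_mem' hx hy i hi := by simp [decompose_add, hx i hi, hy i hi]
  zero_mem' i _ := by simp
  smul_mem' c _ hx _ hi :=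
    coe_decompose_mul_eq_zero_of_lt 𝒜 (a := 0) (fun _ h => absurd h (Nat.not_lt_zero _)) hx
      (by omega)

variable {𝒜}

theorem mul_mem_degreeGE {a b : ℕ} {x y : A} (hx : x ∈ degreeGE 𝒜 a) (hy : y ∈ degreeGE 𝒜 b) :
    x * y ∈ degreeGE 𝒜 (a + b) :=
  fun _ hn => coe_decompose_mul_eq_zero_of_lt 𝒜 hx hy hn

theorem eq_zero_of_forall_mem_degreeGE {x : A} (hx : ∀ m, x ∈ degreeGE 𝒜 m) : x = 0 := by
  classical
  rw [← sum_support_decompose 𝒜 x]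
  exact Finset.sum_eq_zero fun i _ => hx (i + 1) i (Nat.lt_succ_self i)

end DegreeGE

end DirectSum

noncomputable instance HVSetup.gradedRing {d : ℕ} (V : HVSetup d) : GradedRing V.grading where
  __ := V.isInternal.chooseDecomposition
  one_mem := V.one_mem
  mul_mem _ _ _ _ := V.mul_mem _ _ _ _

noncomputable instance UnstableModule.decomposition (M : UnstableModule) :
    Decomposition M.grading :=
  M.isInternal.chooseDecomposition

theorem Sq_zero : Sq 0 = 1 := by
  simpa [Sq] using RingQuot.mkAlgHom_rel (ZMod 2) AdemRel.unit

namespace HVSetup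

variable {d : ℕ} (V : HVSetup d)

def monomial (e : Fin d → ℕ) : V.H := ∏ i, V.gens i ^ e i

noncomputable def monomialBasis : Module.Basis (Fin d → ℕ) (ZMod 2) V.H :=
  .mk V.monomial_indep V.monomial_span

theorem monomialBasis_apply (e : Fin d → ℕ) : V.monomialBasis e = V.monomial e :=
  Module.Basis.mk_apply _ _ _

theorem monomial_zero : V.monomial 0 = 1 := by simp [monomial]

theorem one_ne_zero : (1 : V.H) ≠ 0 := by
  simpa [monomialBasis_apply, monomial_zero] using V.monomialBasis.ne_zero 0

theorem two_eq_zero : (2 : V.H) = 0 := by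
  have h : ((1 : ZMod 2) + 1) • (1 : V.H) = 0 := by
    rw [show (1 : ZMod 2) + 1 = 0 from rfl, zero_smul]
  rwa [add_smul, one_smul, one_add_one_eq_two] at h

instance charP : CharP V.H 2 := CharTwo.of_one_ne_zero_of_two_eq_zero V.one_ne_zero V.two_eq_zero

theorem monomial_mem (e : Fin d → ℕ) : V.monomial e ∈ V.grading (∑ i, e i) := by
  refine SetLike.prod_mem_graded V.grading _ _ fun i _ => ?_
  simpa using SetLike.pow_mem_graded (e i) (V.gens_deg i)

theorem sq_top_mul {a b : ℕ} {x y : V.H} (hx : x ∈ V.grading a) (hy : y ∈ V.grading b) :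
    Sq (a + b) • (x * y) = (Sq a • x) * (Sq b • y) := by
  rw [V.cartanH, Finset.sum_eq_single_of_mem a (by simp), Nat.add_sub_cancel_left]
  intro i _ hi
  rcases lt_or_gt_of_ne hi with hi | hi
  · rw [V.instability _ b y hy (by omega), mul_zero]
  · rw [V.instability i a x hx hi, zero_mul]

theorem exists_sq_top_monomial (e : Fin d → ℕ) :
    ∃ m, V.monomial e ∈ V.grading m ∧ Sq m • V.monomial e = V.monomial e ^ 2 := by
  let S : Submonoid V.H :=
    { carrier := {x | ∃ m, x ∈ V.grading m ∧ Sq m • x = x ^ 2}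
      mul_mem' := by
        rintro x y ⟨a, hx, hsx⟩ ⟨b, hy, hsy⟩
        exact ⟨a + b, V.mul_mem _ _ _ _ hx hy, by rw [V.sq_top_mul hx hy, hsx, hsy, mul_pow]⟩
      one_mem' := ⟨0, V.one_mem, by rw [Sq_zero, one_smul, one_pow]⟩ }
  exact S.prod_mem fun i _ => S.pow_mem ⟨1, V.gens_deg i, by rw [V.sq_one_gen, sq]⟩ _

theorem sq_top_eq_sq {n : ℕ} {h : V.H} (hh : h ∈ V.grading n) : Sq n • h = h ^ 2 := by
  suffices ∀ x : V.H,
      Sq n • (decompose V.grading x n : V.H) = (decompose V.grading x n : V.H) ^ 2 by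
    simpa [decompose_of_mem_same V.grading hh] using this h
  intro x
  induction V.monomial_span (Submodule.mem_top (x := x)) using Submodule.span_induction with
  | mem _ hx =>
    obtain ⟨e, rfl⟩ := hx
    obtain ⟨m, hm, hsq⟩ := V.exists_sq_top_monomial e
    by_cases hmn : m = n
    · subst hmn
      exact (decompose_of_mem_same V.grading hm).symm ▸ hsq
    · change Sq n • (decompose V.grading (V.monomial e) n : V.H) =
        (decompose V.grading (V.monomial e) n : V.H) ^ 2
      simp [decompose_of_mem_ne V.grading hm hmn]
  | zero => simp
  | add x y _ _ hx hy =>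
    rw [decompose_add, DirectSum.add_apply, Submodule.coe_add, smul_add, hx, hy, CharTwo.add_sq]
  | smul c x _ hx =>
    rcases ZMod.eq_zero_or_eq_one c with rfl | rfl <;> simp [hx]

theorem eq_zero_of_sq_eq_zero {h : V.H} (hh : h ^ 2 = 0) : h = 0 := by
  have hdouble : Function.Injective fun e : Fin d → ℕ => e + e := fun e e' hee =>
    funext fun i => by have := congrFun hee i; simp only [Pi.add_apply] at this; omega
  have hsq : Finsupp.linearCombination (ZMod 2) (V.monomial ∘ fun e => e + e)
      (V.monomialBasis.repr h) = h ^ 2 := by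
    conv_rhs => rw [← V.monomialBasis.linearCombination_repr h]
    simp only [Finsupp.linearCombination_apply, Finsupp.sum, CharTwo.sum_sq]
    refine Finset.sum_congr rfl fun e _ => ?_
    rcases ZMod.eq_zero_or_eq_one (V.monomialBasis.repr h e) with hc | hc <;>
      simp [hc, monomialBasis_apply, monomial, pow_add, Finset.prod_mul_distrib, sq]
  simpa using linearIndependent_iff.mp (V.monomial_indep.comp _ hdouble) _ (hsq.trans hh)

noncomputable def augmentation : V.H →ₗ[ZMod 2] ZMod 2 := V.monomialBasis.coord 0

theorem coe_decompose_zero (h : V.H) :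
    (decompose V.grading h 0 : V.H) = V.augmentation h • 1 := by
  induction V.monomial_span (Submodule.mem_top (x := h)) using Submodule.span_induction with
  | mem _ hx =>
    obtain ⟨e, rfl⟩ := hx
    change (decompose V.grading (V.monomial e) 0 : V.H) = V.augmentation (V.monomial e) • 1
    rw [augmentation, ← monomialBasis_apply, Module.Basis.coord_apply, Module.Basis.repr_self,
      monomialBasis_apply]
    by_cases he : e = 0
    · rw [he, monomial_zero, decompose_of_mem_same V.grading V.one_mem, Finsupp.single_eq_same,
        one_smul]
    · have hdeg : ∑ i, e i ≠ 0 := fun h0 =>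
        he (funext fun i => Finset.sum_eq_zero_iff.mp h0 i (Finset.mem_univ i))
      simp [decompose_of_mem_ne V.grading (V.monomial_mem e) hdeg, he]
  | zero => simp
  | add x y _ _ hx hy => simp [decompose_add, add_smul, hx, hy]
  | smul c x _ hx => simp [decompose_smul, DirectSum.smul_apply, hx, smul_smul]

theorem eq_augmentation_smul_one {h : V.H} (hh : h ∈ V.grading 0) : h = V.augmentation h • 1 := by
  rw [← coe_decompose_zero, decompose_of_mem_same V.grading hh]

theorem augmentation_eq_zero {m : ℕ} {h : V.H} (hm : m ≠ 0) (hh : h ∈ V.grading m) :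
    V.augmentation h = 0 := by
  have h0 := V.coe_decompose_zero h
  rw [decompose_of_mem_ne V.grading hh hm, eq_comm, smul_eq_zero] at h0
  exact h0.resolve_right V.one_ne_zero

theorem mem_degreeGE_one {h : V.H} (hh : V.augmentation h = 0) : h ∈ degreeGE V.grading 1 := by
  intro i hi
  rw [Nat.lt_one_iff.mp hi, coe_decompose_zero, hh, zero_smul]

end HVSetup

namespace HVModule

variable {d : ℕ} {V : HVSetup d} (E : HVModule V)

theorem sq_top_smul {a b : ℕ} {h : V.H} {y : E.E.carrier} (hh : h ∈ V.grading a)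
    (hy : y ∈ E.E.grading b) : Sq (a + b) • (h • y) = (Sq a • h) • (Sq b • y) := by
  rw [E.cartan, Finset.sum_eq_single_of_mem a (by simp), Nat.add_sub_cancel_left]
  intro i _ hi
  rcases lt_or_gt_of_ne hi with hi | hi
  · rw [E.E.instability _ b y hy (by omega), smul_zero]
  · rw [V.instability i a h hh hi, zero_smul]

theorem coe_decompose_smul_of_mem_left {m : ℕ} {h : V.H} (hh : h ∈ V.grading m)
    (y : E.E.carrier) (n : ℕ) :
    (decompose E.E.grading (h • y) n : E.E.carrier) =
      if m ≤ n then h • (decompose E.E.grading y (n - m) : E.E.carrier) else 0 :=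
  coe_decompose_map_of_degree (DistribSMul.toAddMonoidHom _ h)
    (fun _ _ hx => E.smul_grading _ _ _ _ hh hx) y n

theorem coe_decompose_smul_of_mem_right {b : ℕ} {y : E.E.carrier} (hy : y ∈ E.E.grading b)
    (h : V.H) (n : ℕ) :
    (decompose E.E.grading (h • y) n : E.E.carrier) =
      if b ≤ n then (decompose V.grading h (n - b) : V.H) • y else 0 :=
  coe_decompose_map_of_degree (smulAddHom V.H E.E.carrier |>.flip y)
    (fun i _ hx => add_comm i b ▸ E.smul_grading _ _ _ _ hx hy) h n

theorem barπ_decompose (y : E.E.carrier) (n : ℕ) :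
    E.barπ.toFun (decompose E.E.grading y n) = decompose E.bar.grading (E.barπ.toFun y) n := by
  have := coe_decompose_map_of_degree (𝓝 := E.bar.grading) E.barπ.toFun.toAddMonoidHom
    (k := 0) (fun i x hx => (zero_add i).symm ▸ E.barπ.map_grading i x hx) y n
  simpa using this.symm

theorem exists_homogeneous_lift {n : ℕ} {v : E.bar.carrier} (hv : v ∈ E.bar.grading n) :
    ∃ y ∈ E.E.grading n, E.barπ.toFun y = v := by
  obtain ⟨y, rfl⟩ := E.barπ_surj v
  exact ⟨_, (decompose E.E.grading y n).2, by
    rw [barπ_decompose, decompose_of_mem_same E.bar.grading hv]⟩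

theorem barπ_smul (h : V.H) (y : E.E.carrier) :
    E.barπ.toFun (h • y) = V.augmentation h • E.barπ.toFun y := by
  classical
  conv_lhs => rw [← sum_support_decompose V.grading h, Finset.sum_smul, map_sum]
  rw [Finset.sum_eq_single 0]
  · rw [V.coe_decompose_zero]
    rcases ZMod.eq_zero_or_eq_one (V.augmentation h) with hε | hε <;> simp [hε]
  · intro j _ hj
    rw [E.barπ_ker]
    exact Submodule.subset_span ⟨j, _, y, Nat.one_le_iff_ne_zero.mpr hj, (decompose _ h j).2, rfl⟩
  · intro h0
    rw [DFinsupp.notMem_support_iff.mp h0, ZeroMemClass.coe_zero, zero_smul, map_zero]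

theorem barπ_linearCombination {ι : Type*} (e : ι → E.E.carrier) (f : ι →₀ V.H) :
    E.barπ.toFun (Finsupp.linearCombination V.H e f) =
      Finsupp.linearCombination (ZMod 2) (E.barπ.toFun ∘ e)
        (f.mapRange V.augmentation V.augmentation.map_zero) := by
  rw [Finsupp.linearCombination_apply, Finsupp.linearCombination_apply,
    Finsupp.sum_mapRange_index (by simp), Finsupp.sum, Finsupp.sum, map_sum]
  simp only [barπ_smul, Function.comp_apply]

theorem decompose_mem_of_mem_span (N : Submodule V.H E.E.carrier) {S : Set E.E.carrier} {n : ℕ}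
    (hS : ∀ s ∈ S, (decompose E.E.grading s n : E.E.carrier) ∈ N) {y : E.E.carrier}
    (hy : y ∈ Submodule.span (ZMod 2) S) : (decompose E.E.grading y n : E.E.carrier) ∈ N := by
  let proj : E.E.carrier →+ E.E.carrier :=
    AddMonoidHom.mk' (fun y => decompose E.E.grading y n) (by simp [decompose_add])
  exact (Submodule.span_le (p := AddSubgroup.toZModSubmodule 2
    (N.toAddSubgroup.comap proj))).mpr hS hy

theorem mem_span_of_mem_grading {ι : Type*} {e : ι → E.E.carrier} {deg : ι → ℕ}
    (he : ∀ α, e α ∈ E.E.grading (deg α))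
    (hspan : Submodule.span (ZMod 2) (Set.range (E.barπ.toFun ∘ e)) = ⊤) (n : ℕ) :
    ∀ x ∈ E.E.grading n, x ∈ Submodule.span V.H (Set.range e) := by
  set N := Submodule.span V.H (Set.range e)
  induction n using Nat.strong_induction_on with
  | _ n ih =>
  intro x hx
  have hπx : E.barπ.toFun x ∈
      (Submodule.span (ZMod 2) (Set.range e)).map (E.barπ.toFun.restrictScalars (ZMod 2)) := by
    rw [← Submodule.span_image, ← Set.range_comp,
      LinearMap.coe_restrictScalars (ZMod 2) E.barπ.toFun, hspan]
    trivial
  obtain ⟨y, hy, hyx⟩ := hπx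
  replace hyx : E.barπ.toFun y = E.barπ.toFun x := hyx
  have hlift : (decompose E.E.grading y n : E.E.carrier) ∈ N := by
    refine E.decompose_mem_of_mem_span N ?_ hy
    rintro _ ⟨α, rfl⟩
    by_cases hα : deg α = n
    · rw [decompose_of_mem_same _ (hα ▸ he α)]
      exact Submodule.subset_span ⟨α, rfl⟩
    · rw [decompose_of_mem_ne _ (he α) hα]
      exact N.zero_mem
  have hker : (decompose E.E.grading (x - y) n : E.E.carrier) ∈ N := by
    refine E.decompose_mem_of_mem_span N ?_ ((E.barπ_ker _).mp (by simp [hyx]))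
    rintro _ ⟨m, h, z, hm, hh, rfl⟩
    rw [E.coe_decompose_smul_of_mem_left hh]
    split_ifs with hmn
    · exact N.smul_mem h (ih (n - m) (by omega) _ (decompose _ z _).2)
    · exact N.zero_mem
  simpa [decompose_sub, decompose_of_mem_same _ hx] using N.add_mem hker hlift

theorem span_eq_top_of_span_bar {ι : Type*} {e : ι → E.E.carrier} {deg : ι → ℕ}
    (he : ∀ α, e α ∈ E.E.grading (deg α))
    (hspan : Submodule.span (ZMod 2) (Set.range (E.barπ.toFun ∘ e)) = ⊤) :
    Submodule.span V.H (Set.range e) = ⊤ := by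
  classical
  refine eq_top_iff.mpr fun x _ => ?_
  rw [← sum_support_decompose E.E.grading x]
  exact Submodule.sum_mem _ fun n _ => E.mem_span_of_mem_grading he hspan n _ (decompose _ x n).2

theorem linearIndependent_of_bar [Module.Projective V.H E.E.carrier] {ι : Type*}
    {e : ι → E.E.carrier} (hspan : Submodule.span V.H (Set.range e) = ⊤)
    (hli : LinearIndependent (ZMod 2) (E.barπ.toFun ∘ e)) : LinearIndependent V.H e := by
  set Φ := Finsupp.linearCombination V.H e
  obtain ⟨s, hs⟩ := Module.projective_lifting_property Φ LinearMap.id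
    (by rw [← LinearMap.range_eq_top, Finsupp.range_linearCombination, hspan])
  -- `q` projects onto `ker Φ`; writing `f ∈ ker Φ` as `q f` shows `ker Φ ⊆ H^{≥1}V · ker Φ`.
  set q := LinearMap.id - s ∘ₗ Φ
  have hq : ∀ f, Φ (q f) = 0 := fun f => by
    simp [q, ← LinearMap.comp_apply Φ s, hs]
  have haug : ∀ f, Φ f = 0 → ∀ α, f α ∈ degreeGE V.grading 1 := by
    intro f hf α
    have := linearIndependent_iff.mp hli _ (by rw [← barπ_linearCombination, hf, map_zero])
    exact V.mem_degreeGE_one (by simpa using DFunLike.congr_fun this α)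
  have hfilt : ∀ m f, Φ f = 0 → ∀ α, f α ∈ degreeGE V.grading m := by
    intro m
    induction m with
    | zero => exact fun _ _ _ _ hi => absurd hi (Nat.not_lt_zero _)
    | succ m ih =>
      intro f hf β
      have hfq : f = ∑ α ∈ f.support, f α • q (Finsupp.single α 1) := by
        conv_lhs => rw [show f = q f by simp [q, hf], ← Finsupp.sum_single f]
        rw [Finsupp.sum, map_sum]
        exact Finset.sum_congr rfl fun α _ => by rw [← Finsupp.smul_single_one, map_smul]
      rw [hfq, Finsupp.finsetSum_apply, add_comm]
      exact Ideal.sum_mem _ fun α _ => mul_mem_degreeGE (haug f hf α) (ih _ (hq _) β)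
  refine linearIndependent_iff.mpr fun f hf => Finsupp.ext fun α => ?_
  exact eq_zero_of_forall_mem_degreeGE fun m => hfilt m f hf α

theorem exists_homogeneous_basis [Module.Projective V.H E.E.carrier] :
    ∃ (ι : Type) (b : Module.Basis ι V.H E.E.carrier) (deg : ι → ℕ),
      (∀ α, b α ∈ E.E.grading (deg α)) ∧ LinearIndependent (ZMod 2) (E.barπ.toFun ∘ b) := by
  let u := E.bar.isInternal.collectedBasis
    fun n => Module.Basis.ofVectorSpace (ZMod 2) (E.bar.grading n)
  choose e he hπe using fun α => E.exists_homogeneous_lift (E.bar.isInternal.collectedBasis_mem _ α)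
  have hπ : E.barπ.toFun ∘ e = u := funext hπe
  have hspan := E.span_eq_top_of_span_bar he (by rw [hπ, u.span_eq])
  refine ⟨_, .mk (E.linearIndependent_of_bar hspan (hπ ▸ u.linearIndependent)) hspan.ge,
    fun α => α.1, fun α => ?_, ?_⟩
  · simpa using he α
  · simpa [hπ] using u.linearIndependent

section HomogeneousBasis

variable {ι : Type*} (b : Module.Basis ι V.H E.E.carrier) {deg : ι → ℕ}

theorem repr_mem_grading (hb : ∀ α, b α ∈ E.E.grading (deg α)) {n : ℕ} {x : E.E.carrier}
    (hx : x ∈ E.E.grading n) (α : ι) :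
    b.repr x α ∈ V.grading (n - deg α) ∧ (n < deg α → b.repr x α = 0) := by
  classical
  set g : ι → V.H := fun β =>
    if deg β ≤ n then decompose V.grading (b.repr x β) (n - deg β) else 0
  have hxg : x = ∑ β ∈ (b.repr x).support, g β • b β := by
    conv_lhs => rw [← decompose_of_mem_same _ hx, ← b.linearCombination_repr x,
      Finsupp.linearCombination_apply, Finsupp.sum, decompose_sum, DFinsupp.finsetSum_apply,
      AddSubmonoidClass.coe_finsetSum]
    refine Finset.sum_congr rfl fun β _ => ?_
    rw [E.coe_decompose_smul_of_mem_right (hb β)]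
    split_ifs <;> simp [g, *]
  have hrepr : b.repr x α = if α ∈ (b.repr x).support then g α else 0 := by
    conv_lhs => rw [hxg]
    simp [map_sum, Finsupp.single_apply]
  rw [hrepr]
  simp only [g]
  split_ifs with _ hle
  · exact ⟨(decompose _ _ _).2, fun h => absurd hle (not_le.mpr h)⟩
  all_goals exact ⟨zero_mem _, fun _ => rfl⟩

theorem sq_top_eq_sum (hb : ∀ α, b α ∈ E.E.grading (deg α)) {n : ℕ} {x : E.E.carrier}
    (hx : x ∈ E.E.grading n) :
    Sq n • x = ∑ α ∈ (b.repr x).support, b.repr x α ^ 2 • Sq (deg α) • b α := by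
  conv_lhs => rw [← b.linearCombination_repr x, Finsupp.linearCombination_apply, Finsupp.sum,
    Finset.smul_sum]
  refine Finset.sum_congr rfl fun α hα => ?_
  obtain ⟨hmem, hzero⟩ := E.repr_mem_grading b hb hx α
  have hle : deg α ≤ n := not_lt.mp fun h => Finsupp.mem_support_iff.mp hα (hzero h)
  rw [← V.sq_top_eq_sq hmem, ← E.sq_top_smul hmem (hb α), Nat.sub_add_cancel hle]

/-- The coefficients of `x` in the top degree `p` are killed by the matrix of
`Sq₀ : Ē^p → Ē^{2p}`, extended `H^*V`-linearly. -/
theorem sum_augmentation_smul_repr_eq_zero (hb : ∀ α, b α ∈ E.E.grading (deg α)) {n p : ℕ}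
    {x : E.E.carrier} (hx : x ∈ E.E.grading n) (hsq : Sq n • x = 0)
    (hp : ∀ α ∈ (b.repr x).support, deg α ≤ p) (β : ι) :
    ∑ α ∈ (b.repr x).support with deg α = p,
      V.augmentation (b.repr (Sq p • b α) β) • b.repr x α = 0 := by
  have hD : ∀ α, b.repr (Sq (deg α) • b α) β ∈ V.grading (deg α + deg α - deg β) ∧
      (deg α + deg α < deg β → b.repr (Sq (deg α) • b α) β = 0) :=
    fun α => E.repr_mem_grading b hb (E.E.sq_mem _ _ _ (hb α)) β
  rcases lt_trichotomy (deg β) (p + p) with hlt | heq | hgt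
  · refine Finset.sum_eq_zero fun α hα => ?_
    obtain ⟨-, rfl⟩ := Finset.mem_filter.mp hα
    rw [V.augmentation_eq_zero (by omega) (hD α).1, zero_smul]
  · apply V.eq_zero_of_sq_eq_zero
    have hcoord : ∑ α ∈ (b.repr x).support,
        b.repr x α ^ 2 * b.repr (Sq (deg α) • b α) β = 0 := by
      simpa [hsq, map_sum, Finsupp.finsetSum_apply] using
        (congrArg (fun y => b.repr y β) (E.sq_top_eq_sum b hb hx)).symm
    rw [CharTwo.sum_sq, ← hcoord, Finset.sum_filter]
    refine Finset.sum_congr rfl fun α hα => ?_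
    split_ifs with hαp
    · subst hαp
      conv_rhs => rw [V.eq_augmentation_smul_one (h := b.repr (Sq (deg α) • b α) β)
        (by simpa [heq] using (hD α).1)]
      rcases ZMod.eq_zero_or_eq_one (V.augmentation (b.repr (Sq (deg α) • b α) β)) with h | h <;>
        simp [h]
    · rw [(hD α).2 (by have := hp α hα; omega), mul_zero]
  · refine Finset.sum_eq_zero fun α hα => ?_
    obtain ⟨-, rfl⟩ := Finset.mem_filter.mp hα
    rw [(hD α).2 (by omega), map_zero, zero_smul]

theorem isReducedU_of_homogeneous_basis (hb : ∀ α, b α ∈ E.E.grading (deg α))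
    (hli : LinearIndependent (ZMod 2) (E.barπ.toFun ∘ b)) (hred : IsReducedU E.bar) :
    IsReducedU E.E := by
  intro n x hx hsq
  by_contra hx0
  obtain ⟨α₀, hα₀, hmax⟩ := (b.repr x).support.exists_max_image deg
    (Finsupp.support_nonempty_iff.mpr (by simpa using hx0))
  set S := (b.repr x).support.filter (deg · = deg α₀)
  have htop := E.sum_augmentation_smul_repr_eq_zero b hb hx hsq hmax
  -- Each functional `φ : H^*V → F₂` turns the top coefficients into an element of `ker Sq₀ ⊆ Ē`.
  refine Finsupp.mem_support_iff.mp hα₀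
    ((Module.forall_dual_apply_eq_zero_iff (ZMod 2) _).mp fun φ => ?_)
  let v := ∑ α ∈ S, φ (b.repr x α) • E.barπ.toFun (b α)
  have hv : v ∈ E.bar.grading (deg α₀) := Submodule.sum_mem _ fun α hα =>
    Submodule.smul_mem _ _ ((Finset.mem_filter.mp hα).2 ▸ E.barπ.map_grading _ _ (hb α))
  have hsqv : Sq (deg α₀) • v = Finsupp.linearCombination (ZMod 2) (E.barπ.toFun ∘ b)
      (∑ α ∈ S, φ (b.repr x α) •
        (b.repr (Sq (deg α₀) • b α)).mapRange V.augmentation V.augmentation.map_zero) := by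
    simp only [v, Finset.smul_sum, map_sum, map_smul]
    refine Finset.sum_congr rfl fun α _ => ?_
    rw [smul_comm, ← E.barπ.toFun.map_smul, ← barπ_linearCombination, b.linearCombination_repr]
  have hcoef : ∑ α ∈ S, φ (b.repr x α) •
      (b.repr (Sq (deg α₀) • b α)).mapRange V.augmentation V.augmentation.map_zero = 0 := by
    ext β
    simpa [Finsupp.finsetSum_apply, mul_comm] using congrArg φ (htop β)
  have hv0 : v = 0 := hred _ v hv (by rw [hsqv, hcoef, map_zero])
  exact linearIndependent_iff'.mp hli S _ hv0 α₀ (Finset.mem_filter.mpr ⟨hα₀, rfl⟩)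

end HomogeneousBasis

end HVModule

/-- Corollary 3.2.2.  Let `E` be an unstable `H^*V`-`A`-module which
is free as an `H^*V`-module and such that `Ē` is reduced as an unstable `A`-module.
Then `E` is reduced as an unstable `A`-module. -/
theorem reduced_of_bar_reduced {d : ℕ} (V : HVSetup d) (E : HVModule V)
    (hfree : Module.Free V.H E.E.carrier)
    (hred : IsReducedU E.bar) :
    IsReducedU E.E := by
  obtain ⟨ι, b, deg, hb, hli⟩ := E.exists_homogeneous_basis
  exact E.isReducedU_of_homogeneous_basis b hb hli hred
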